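/- Generalization bound: Let H be a nonempty set of measurable NE approximators, D a probability measure on U, m ≥ 1, δ ∈ (0,1), r > 0, and suppose C is a nonempty finite set of NE approximators of cardinality K that r-covers H. Assume the function S ↦ sup_{h∈H}(L_D(h) − L_S(h)) on U^m is measurable with respect to the product measure D^m. Then with probability at least 1 − δ over the draw of an i.i.d. sample S = (u^{(1)},…,u^{(m)}) ∼ D^m, every h ∈ H satisfies L_D(h) − L_S(h) ≤ 2·(√(2·ln K / m) + 2r) + 4·√(2·ln(4/δ) / m). -/

import Mathlib

/-!
Expected utility is multilinear in the mixed strategies, and replacing one player's strategy `p`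
by `q` moves it by at most `‖p - q‖₁ / 2`: payoffs lie in `[0, 1]` and `∑ (p - q) = 0`, so the
payoffs may be centred at `1 / 2`. A hybrid argument over the players then makes `NashApr`
`1`-Lipschitz in the profile for the `ℓ₁` distance.

Only members of `H` are known to be measurable, so for each element of the `r`-cover `C` we pick
a member of `H` that it `r`-approximates; this gives a `2r`-cover `C' ⊆ H` with at most `K`
elements, and moving from `h ∈ H` to its neighbour in `C'` changes true and empirical risk by at
most `2r` each. Since `NashApr ∈ [0, 1]`, Hoeffding's inequality bounds the probability that the
gap of a fixed `g ∈ C'` exceeds `t` by `exp (-2 m t²)`; a union bound over `C'` and the choice of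
`t` finish the proof.
-/

open Finset MeasureTheory

section NashDefs

variable {N : Type*} {A : N → Type*}

/-- `σ` is a mixed strategy profile: each `σ i` is a probability distribution on `A i`. -/
def IsMixedProfile [∀ i, Fintype (A i)] (σ : ∀ i, A i → ℝ) : Prop :=
  (∀ i a, 0 ≤ σ i a) ∧ ∀ i, ∑ a, σ i a = 1

/-- Expected utility of player `i` when the mixed strategy profile `σ` is played:
`u_i(σ) = ∑_{a ∈ A} (∏_j σ_j(a_j)) u_i(a)`. -/
def expUtil [Fintype N] [DecidableEq N] [∀ i, Fintype (A i)]
    (u : N → (∀ j, A j) → ℝ) (i : N) (σ : ∀ j, A j → ℝ) : ℝ :=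
  ∑ a : ∀ j, A j, (∏ j, σ j (a j)) * u i a

/-- The pure strategy of player `i` playing action `b` with probability one. -/
def pureStrat [∀ i, DecidableEq (A i)] {i : N} (b : A i) : A i → ℝ :=
  fun c => if c = b then 1 else 0

/-- Nash approximation loss:
`NashApr(σ, u) = max_{i ∈ N} max_{b ∈ A_i} [u_i(b, σ_{-i}) - u_i(σ)]`. -/
noncomputable def nashApr [Fintype N] [DecidableEq N] [Nonempty N]
    [∀ i, Fintype (A i)] [∀ i, DecidableEq (A i)] [∀ i, Nonempty (A i)]
    (σ : ∀ i, A i → ℝ) (u : N → (∀ j, A j) → ℝ) : ℝ :=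
  Finset.univ.sup' Finset.univ_nonempty fun i : N =>
    Finset.univ.sup' Finset.univ_nonempty fun b : A i =>
      expUtil u i (Function.update σ i (pureStrat b)) - expUtil u i σ

/-- ℓ1-distance between mixed strategy profiles:
`‖σ - σ'‖₁ = ∑_{i ∈ N} ∑_{a_i ∈ A_i} |σ_i(a_i) - σ'_i(a_i)|`. -/
def dist1 [Fintype N] [∀ i, Fintype (A i)] (σ σ' : ∀ i, A i → ℝ) : ℝ :=
  ∑ i, ∑ a, |σ i a - σ' i a|

/-- ℓmax-distance between game utilities:
`‖u - v‖max = max_{i ∈ N} max_{a ∈ A} |u_i(a) - v_i(a)|`. -/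
noncomputable def distMax [Fintype N] [DecidableEq N] [Nonempty N]
    [∀ i, Fintype (A i)] [∀ i, Nonempty (A i)]
    (u v : N → (∀ j, A j) → ℝ) : ℝ :=
  Finset.univ.sup' Finset.univ_nonempty fun i : N =>
    Finset.univ.sup' Finset.univ_nonempty fun a : ∀ j, A j => |u i a - v i a|

end NashDefs

/-- The set of all game utilities (with values in `[0,1]`) for fixed players `N`
and action space `A`, as a subtype. -/
abbrev GameUtil (N : Type*) (A : N → Type*) : Type _ :=
  {u : N → (∀ j, A j) → ℝ // ∀ i a, u i a ∈ Set.Icc (0 : ℝ) 1}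

/-- An NE approximator maps game utilities to mixed strategy profiles. -/
abbrev NEApprox (N : Type*) (A : N → Type*) [∀ i, Fintype (A i)] : Type _ :=
  {h : GameUtil N A → ∀ i, A i → ℝ // ∀ u, IsMixedProfile (h u)}

section Risk

variable {N : Type*} {A : N → Type*} [Fintype N] [DecidableEq N] [Nonempty N]
  [∀ i, Fintype (A i)] [∀ i, DecidableEq (A i)] [∀ i, Nonempty (A i)]

/-- Nash approximation loss of an NE approximator on a game. -/
noncomputable def nashLoss (h : NEApprox N A) (u : GameUtil N A) : ℝ :=
  nashApr (h.1 u) u.1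

/-- True risk `L_D(h) = E_{u ∼ D}[NashApr(h(u), u)]`. -/
noncomputable def trueRisk (D : Measure (GameUtil N A)) (h : NEApprox N A) : ℝ :=
  ∫ u, nashLoss h u ∂D

/-- Empirical risk `L_S(h) = (1/m) ∑_j NashApr(h(u⁽ʲ⁾), u⁽ʲ⁾)`. -/
noncomputable def empRisk {m : ℕ} (S : Fin m → GameUtil N A) (h : NEApprox N A) : ℝ :=
  (1 / (m : ℝ)) * ∑ j, nashLoss h (S j)

/-- `C` `r`-covers `H` under the `ℓ_{∞,1}`-distance:
every `h ∈ H` is within `ℓ_{∞,1}`-distance `r` of some `g ∈ C`. -/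
def Covers (r : ℝ) (C : Finset (NEApprox N A)) (H : Set (NEApprox N A)) : Prop :=
  ∀ h ∈ H, ∃ g ∈ C, ∀ u, dist1 (h.1 u) (g.1 u) ≤ r

end Risk

open ProbabilityTheory in
theorem pi_measureReal_sum_integral_sub_ge_le {X : Type*} [MeasurableSpace X] (D : Measure X)
    [IsProbabilityMeasure D] {f : X → ℝ} (hf : Measurable f) (hf01 : ∀ x, f x ∈ Set.Icc 0 1)
    (m : ℕ) {ε : ℝ} (hε : 0 ≤ ε) :
    (Measure.pi fun _ : Fin m => D).real {S | ε ≤ ∑ j, (∫ x, f x ∂D - f (S j))} ≤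
      Real.exp (-2 * ε ^ 2 / m) := by
  set g : X → ℝ := fun x => -f x - ∫ y, -f y ∂D
  -- Hoeffding's lemma for `-f ∈ [-1, 0]`: the parameter is `1 / 4`.
  have hsubG : HasSubgaussianMGF g ((‖(0:ℝ) - -1‖₊ / 2) ^ 2) D :=
    hasSubgaussianMGF_of_mem_Icc hf.neg.aemeasurable
      (ae_of_all _ fun x => ⟨neg_le_neg (hf01 x).2, neg_nonpos.2 (hf01 x).1⟩)
  have hcoord (j : Fin m) :
      HasSubgaussianMGF (g ∘ fun S => S j) ((‖(0:ℝ) - -1‖₊ / 2) ^ 2) (Measure.pi fun _ => D) :=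
    .of_map (measurable_pi_apply j).aemeasurable
      (by rwa [(measurePreserving_eval (fun _ : Fin m => D) j).map_eq])
  have hhoeffding := HasSubgaussianMGF.measure_sum_ge_le_of_iIndepFun (s := Finset.univ)
    (iIndepFun_pi (μ := fun _ : Fin m => D) (X := fun _ => g)
      fun _ => (hf.neg.sub_const _).aemeasurable) (fun j _ => hcoord j) hε
  simp only [g, integral_neg, sub_neg_eq_add, neg_add_eq_sub, Finset.sum_const, Finset.card_univ,
    Fintype.card_fin] at hhoeffding
  refine hhoeffding.trans_eq (congrArg Real.exp ?_)
  push_cast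
  simp only [zero_add, norm_one]
  ring

theorem ofReal_one_sub_measureReal_compl_le {X : Type*} [MeasurableSpace X] (μ : Measure X)
    [IsProbabilityMeasure μ] (s : Set X) : ENNReal.ofReal (1 - μ.real sᶜ) ≤ μ s := by
  rw [ENNReal.ofReal_sub _ measureReal_nonneg, ENNReal.ofReal_one, ofReal_measureReal,
    tsub_le_iff_right, ← measure_univ (μ := μ)]
  exact measure_univ_le_add_compl s

theorem abs_sum_sub_mul_le_half {ι : Type*} (s : Finset ι) {p q x : ι → ℝ}
    (hpq : ∑ i ∈ s, p i = ∑ i ∈ s, q i) (hx : ∀ i ∈ s, x i ∈ Set.Icc 0 1) :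
    |∑ i ∈ s, (p i - q i) * x i| ≤ 1 / 2 * ∑ i ∈ s, |p i - q i| := by
  have hcenter : ∑ i ∈ s, (p i - q i) * x i = ∑ i ∈ s, (p i - q i) * (x i - 1 / 2) := by
    simp only [mul_sub, Finset.sum_sub_distrib, ← Finset.sum_mul, hpq, sub_self, zero_mul,
      sub_zero]
  rw [hcenter, Finset.mul_sum]
  refine (Finset.abs_sum_le_sum_abs _ _).trans (Finset.sum_le_sum fun i hi => ?_)
  have hxi : |x i - 1 / 2| ≤ 1 / 2 :=
    abs_le.2 ⟨by linarith [(hx i hi).1], by linarith [(hx i hi).2]⟩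
  rw [abs_mul, mul_comm (1 / 2)]
  exact mul_le_mul_of_nonneg_left hxi (abs_nonneg _)

section Game

variable {N : Type*} {A : N → Type*} [∀ i, Fintype (A i)]

theorem dist1_comm [Fintype N] (σ σ' : ∀ i, A i → ℝ) : dist1 σ σ' = dist1 σ' σ := by
  simp only [dist1, abs_sub_comm]

theorem dist1_triangle [Fintype N] (σ τ σ' : ∀ i, A i → ℝ) :
    dist1 σ σ' ≤ dist1 σ τ + dist1 τ σ' := by
  simp only [dist1, ← Finset.sum_add_distrib]
  exact Finset.sum_le_sum fun i _ => Finset.sum_le_sum fun a _ => abs_sub_le _ _ _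

variable [DecidableEq N]

theorem IsMixedProfile.update {σ : ∀ i, A i → ℝ} (hσ : IsMixedProfile σ) (i : N) {p : A i → ℝ}
    (hp : ∀ b, 0 ≤ p b) (hp1 : ∑ b, p b = 1) : IsMixedProfile (Function.update σ i p) := by
  constructor
  · intro j
    rcases eq_or_ne j i with rfl | hj
    · simpa using hp
    · simpa [hj] using hσ.1 j
  · intro j
    rcases eq_or_ne j i with rfl | hj
    · simpa using hp1
    · simpa [hj] using hσ.2 j

theorem IsMixedProfile.update_pureStrat [∀ i, DecidableEq (A i)] {σ : ∀ i, A i → ℝ}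
    (hσ : IsMixedProfile σ) (i : N) (b : A i) :
    IsMixedProfile (Function.update σ i (pureStrat b)) :=
  hσ.update i (fun c => by unfold pureStrat; split_ifs <;> norm_num) (by simp [pureStrat])

theorem IsMixedProfile.piecewise {σ σ' : ∀ i, A i → ℝ} (hσ : IsMixedProfile σ)
    (hσ' : IsMixedProfile σ') (s : Finset N) : IsMixedProfile (s.piecewise σ σ') := by
  constructor
  · intro j
    by_cases hj : j ∈ s
    · simpa [hj] using hσ.1 j
    · simpa [hj] using hσ'.1 j
  · intro j
    by_cases hj : j ∈ s
    · simpa [hj] using hσ.2 j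
    · simpa [hj] using hσ'.2 j

variable [Fintype N]

theorem dist1_update_le (σ σ' : ∀ i, A i → ℝ) (i : N) (p : A i → ℝ) :
    dist1 (Function.update σ i p) (Function.update σ' i p) ≤ dist1 σ σ' := by
  refine Finset.sum_le_sum fun j _ => ?_
  rcases eq_or_ne j i with rfl | hj
  · simpa using Finset.sum_nonneg fun a _ => abs_nonneg (σ j a - σ' j a)
  · simp [hj]

theorem expUtil_mem_Icc {u : N → (∀ j, A j) → ℝ} (hu : ∀ i a, u i a ∈ Set.Icc (0 : ℝ) 1)
    {σ : ∀ i, A i → ℝ} (hσ : IsMixedProfile σ) (i : N) :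
    expUtil u i σ ∈ Set.Icc (0 : ℝ) 1 := by
  have hweight (a : ∀ j, A j) : 0 ≤ ∏ j, σ j (a j) := Finset.prod_nonneg fun j _ => hσ.1 j (a j)
  have htotal : ∑ a : ∀ j, A j, ∏ j, σ j (a j) = 1 := by
    rw [← Fintype.piFinset_univ, ← Finset.prod_univ_sum]
    simp [hσ.2]
  refine ⟨Finset.sum_nonneg fun a _ => mul_nonneg (hweight a) (hu i a).1, ?_⟩
  calc expUtil u i σ ≤ ∑ a : ∀ j, A j, ∏ j, σ j (a j) :=
        Finset.sum_le_sum fun a _ => mul_le_of_le_one_right (hweight a) (hu i a).2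
    _ = 1 := htotal

variable [∀ i, DecidableEq (A i)]

theorem expUtil_update (u : N → (∀ j, A j) → ℝ) (k : N)
    (τ : ∀ i, A i → ℝ) (i : N) (p : A i → ℝ) :
    expUtil u k (Function.update τ i p) =
      ∑ b, p b * expUtil u k (Function.update τ i (pureStrat b)) := by
  have hprod (q : A i → ℝ) (a : ∀ j, A j) :
      ∏ j, Function.update τ i q j (a j) = q (a i) * ∏ j ∈ Finset.univ \ {i}, τ j (a j) := by
    simp_rw [Function.apply_update (fun j (x : A j → ℝ) => x (a j))]
    exact Finset.prod_update_of_mem (Finset.mem_univ i) _ _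
  simp only [expUtil, hprod, Finset.mul_sum]
  rw [Finset.sum_comm]
  refine Finset.sum_congr rfl fun a _ => ?_
  simp [pureStrat, ← mul_assoc]

theorem abs_expUtil_update_sub_le {u : N → (∀ j, A j) → ℝ}
    (hu : ∀ i a, u i a ∈ Set.Icc (0 : ℝ) 1) {τ : ∀ i, A i → ℝ} (hτ : IsMixedProfile τ) (k i : N)
    {p q : A i → ℝ} (hpq : ∑ b, p b = ∑ b, q b) :
    |expUtil u k (Function.update τ i p) - expUtil u k (Function.update τ i q)| ≤
      1 / 2 * ∑ b, |p b - q b| := by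
  rw [expUtil_update, expUtil_update, ← Finset.sum_sub_distrib]
  simp_rw [← sub_mul]
  exact abs_sum_sub_mul_le_half _ hpq fun b _ => expUtil_mem_Icc hu (hτ.update_pureStrat i b) k

theorem abs_expUtil_sub_le {u : N → (∀ j, A j) → ℝ}
    (hu : ∀ i a, u i a ∈ Set.Icc (0 : ℝ) 1) {σ σ' : ∀ i, A i → ℝ} (hσ : IsMixedProfile σ)
    (hσ' : IsMixedProfile σ') (k : N) :
    |expUtil u k σ - expUtil u k σ'| ≤ 1 / 2 * dist1 σ σ' := by
  have hybrid (s : Finset N) : |expUtil u k (s.piecewise σ σ') - expUtil u k σ'| ≤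
      1 / 2 * ∑ j ∈ s, ∑ b, |σ j b - σ' j b| := by
    induction s using Finset.induction with
    | empty => simp
    | insert i s hi ih =>
      have hτ := hσ.piecewise hσ' s
      have hstep := abs_expUtil_update_sub_le hu hτ k i ((hσ.2 i).trans (hσ'.2 i).symm)
      have hfix : Function.update (s.piecewise σ σ') i (σ' i) = s.piecewise σ σ' :=
        Function.update_eq_self_iff.2 (Finset.piecewise_eq_of_notMem _ _ _ hi).symm
      rw [hfix] at hstep
      rw [Finset.piecewise_insert, Finset.sum_insert hi, mul_add]
      exact (abs_sub_le _ _ _).trans (add_le_add hstep ih)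
  simpa [dist1] using hybrid Finset.univ

variable [Nonempty N] [∀ i, Nonempty (A i)]

theorem le_nashApr (σ : ∀ i, A i → ℝ) (u : N → (∀ j, A j) → ℝ) (i : N) (b : A i) :
    expUtil u i (Function.update σ i (pureStrat b)) - expUtil u i σ ≤ nashApr σ u :=
  (Finset.le_sup' (fun b : A i =>
      expUtil u i (Function.update σ i (pureStrat b)) - expUtil u i σ) (Finset.mem_univ b)).trans
    (Finset.le_sup' (fun i : N => Finset.univ.sup' Finset.univ_nonempty fun b : A i =>
      expUtil u i (Function.update σ i (pureStrat b)) - expUtil u i σ) (Finset.mem_univ i))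

theorem nashApr_le_add_dist1 {u : N → (∀ j, A j) → ℝ} (hu : ∀ i a, u i a ∈ Set.Icc (0 : ℝ) 1)
    {σ σ' : ∀ i, A i → ℝ} (hσ : IsMixedProfile σ) (hσ' : IsMixedProfile σ') :
    nashApr σ u ≤ nashApr σ' u + dist1 σ σ' := by
  refine Finset.sup'_le _ _ fun i _ => Finset.sup'_le _ _ fun b _ => ?_
  have hdev := abs_expUtil_sub_le hu (hσ.update_pureStrat i b) (hσ'.update_pureStrat i b) i
  have hcur := abs_expUtil_sub_le hu hσ hσ' i
  have hupd := dist1_update_le σ σ' i (pureStrat b)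
  have hopt := le_nashApr σ' u i b
  linarith [abs_le.1 hdev, abs_le.1 hcur]

theorem nashApr_nonneg {σ : ∀ i, A i → ℝ} (hσ : IsMixedProfile σ) (u : N → (∀ j, A j) → ℝ) :
    0 ≤ nashApr σ u := by
  obtain ⟨i⟩ := ‹Nonempty N›
  set dev : A i → ℝ := fun b => expUtil u i (Function.update σ i (pureStrat b))
  obtain ⟨b, -, hb⟩ := Finset.exists_max_image Finset.univ dev Finset.univ_nonempty
  -- `σ` is the mixture over `b` of the pure deviations of player `i`.
  have hmix : expUtil u i σ ≤ dev b := by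
    calc expUtil u i σ = ∑ c, σ i c * dev c := by
          simpa using expUtil_update u i σ i (σ i)
      _ ≤ ∑ c, σ i c * dev b :=
          Finset.sum_le_sum fun c _ =>
            mul_le_mul_of_nonneg_left (hb c (Finset.mem_univ c)) (hσ.1 i c)
      _ = dev b := by rw [← Finset.sum_mul, hσ.2 i, one_mul]
  linarith [le_nashApr σ u i b]

theorem nashApr_le_one {u : N → (∀ j, A j) → ℝ} (hu : ∀ i a, u i a ∈ Set.Icc (0 : ℝ) 1)
    {σ : ∀ i, A i → ℝ} (hσ : IsMixedProfile σ) : nashApr σ u ≤ 1 :=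
  Finset.sup'_le _ _ fun i _ => Finset.sup'_le _ _ fun b _ => by
    linarith [(expUtil_mem_Icc hu (hσ.update_pureStrat i b) i).2, (expUtil_mem_Icc hu hσ i).1]

end Game

theorem Covers.exists_subset_two_mul {N : Type*} {A : N → Type*} [Fintype N]
    [∀ i, Fintype (A i)] {r : ℝ} {C : Finset (NEApprox N A)} {H : Set (NEApprox N A)}
    (hcover : Covers r C H) :
    ∃ C' : Finset (NEApprox N A), ↑C' ⊆ H ∧ C'.card ≤ C.card ∧ Covers (2 * r) C' H := by
  classical
  set near : NEApprox N A → Prop := fun g => ∃ h ∈ H, ∀ u, dist1 (h.1 u) (g.1 u) ≤ r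
  choose! rep hrepH hrep using fun g (hg : near g) => hg
  refine ⟨(C.filter near).image rep, ?_, Finset.card_image_le.trans (Finset.card_filter_le _ _),
    fun h hh => ?_⟩
  · intro x hx
    obtain ⟨g, hg, rfl⟩ := Finset.mem_image.1 hx
    exact hrepH g (Finset.mem_filter.1 hg).2
  · obtain ⟨g, hgC, hhg⟩ := hcover h hh
    have hg : near g := ⟨h, hh, hhg⟩
    refine ⟨rep g, Finset.mem_image_of_mem _ (Finset.mem_filter.2 ⟨hgC, hg⟩), fun u => ?_⟩
    calc dist1 (h.1 u) ((rep g).1 u) ≤ dist1 (h.1 u) (g.1 u) + dist1 (g.1 u) ((rep g).1 u) :=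
          dist1_triangle _ _ _
      _ ≤ r + r := add_le_add (hhg u) (by rw [dist1_comm]; exact hrep g hg u)
      _ = 2 * r := by ring

section Risk

variable {N : Type*} {A : N → Type*} [Fintype N] [DecidableEq N] [Nonempty N]
  [∀ i, Fintype (A i)] [∀ i, DecidableEq (A i)] [∀ i, Nonempty (A i)]

theorem nashLoss_mem_Icc (h : NEApprox N A) (u : GameUtil N A) : nashLoss h u ∈ Set.Icc 0 1 :=
  ⟨nashApr_nonneg (h.2 u) u.1, nashApr_le_one u.2 (h.2 u)⟩

theorem nashLoss_le_nashLoss_add (h g : NEApprox N A) {c : ℝ} (hc : ∀ v, dist1 (h.1 v) (g.1 v) ≤ c)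
    (u : GameUtil N A) : nashLoss h u ≤ nashLoss g u + c :=
  (nashApr_le_add_dist1 u.2 (h.2 u) (g.2 u)).trans (add_le_add le_rfl (hc u))

theorem trueRisk_le_trueRisk_add (D : Measure (GameUtil N A)) [IsProbabilityMeasure D]
    {h g : NEApprox N A} (hh : Measurable (nashLoss h)) (hg : Measurable (nashLoss g)) {c : ℝ}
    (hc : ∀ v, dist1 (h.1 v) (g.1 v) ≤ c) : trueRisk D h ≤ trueRisk D g + c := by
  have hint {f : NEApprox N A} (hf : Measurable (nashLoss f)) : Integrable (nashLoss f) D :=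
    .of_mem_Icc 0 1 hf.aemeasurable (ae_of_all _ (nashLoss_mem_Icc f))
  calc trueRisk D h ≤ ∫ u, (nashLoss g u + c) ∂D :=
        integral_mono (hint hh) ((hint hg).add (integrable_const c))
          (nashLoss_le_nashLoss_add h g hc)
    _ = trueRisk D g + c := by simp [integral_add (hint hg) (integrable_const c), trueRisk]

theorem empRisk_le_empRisk_add {m : ℕ} (hm : m ≠ 0) (S : Fin m → GameUtil N A) {h g : NEApprox N A}
    {c : ℝ} (hc : ∀ v, dist1 (h.1 v) (g.1 v) ≤ c) : empRisk S h ≤ empRisk S g + c := by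
  have hsum : ∑ j, nashLoss h (S j) ≤ ∑ j, nashLoss g (S j) + m * c := by
    simpa [Finset.sum_add_distrib] using
      Finset.sum_le_sum fun j (_ : j ∈ Finset.univ) => nashLoss_le_nashLoss_add h g hc (S j)
  have hm' : (0 : ℝ) < m := by positivity
  simp only [empRisk]
  rw [one_div, inv_mul_le_iff₀ hm', mul_add, mul_inv_cancel_left₀ hm'.ne', mul_comm (m : ℝ) c]
  linarith

theorem pi_measureReal_trueRisk_sub_empRisk_ge_le (D : Measure (GameUtil N A))
    [IsProbabilityMeasure D] {g : NEApprox N A} (hg : Measurable (nashLoss g)) {m : ℕ} (hm : m ≠ 0) {t : ℝ} (ht : 0 ≤ t) :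
    (Measure.pi fun _ : Fin m => D).real {S | t ≤ trueRisk D g - empRisk S g} ≤
      Real.exp (-2 * m * t ^ 2) := by
  have hm' : (0 : ℝ) < m := by positivity
  have hsum (S : Fin m → GameUtil N A) :
      ∑ j, (trueRisk D g - nashLoss g (S j)) = m * (trueRisk D g - empRisk S g) := by
    simp only [Finset.sum_sub_distrib, Finset.sum_const, Finset.card_univ, Fintype.card_fin,
      nsmul_eq_mul, empRisk]
    field_simp
  have hset : {S : Fin m → GameUtil N A | t ≤ trueRisk D g - empRisk S g} =
      {S | m * t ≤ ∑ j, (trueRisk D g - nashLoss g (S j))} := by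
    ext S
    simp only [Set.mem_ofPred_eq, hsum, mul_le_mul_iff_right₀ hm']
  rw [hset]
  refine (pi_measureReal_sum_integral_sub_ge_le D hg (nashLoss_mem_Icc g) m
    (mul_nonneg hm'.le ht)).trans_eq (congrArg Real.exp ?_)
  field_simp

end Risk

theorem natCast_mul_exp_le {K m : ℕ} (hm : m ≠ 0) {δ : ℝ} (hδ₀ : 0 < δ) (hδ₁ : δ ≤ 1) :
    (K : ℝ) * Real.exp (-2 * m *
      (2 * Real.sqrt (2 * Real.log K / m) + 4 * Real.sqrt (2 * Real.log (4 / δ) / m)) ^ 2) ≤ δ := by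
  rcases K.eq_zero_or_pos with rfl | hK
  · simpa using hδ₀.le
  have hm' : (0 : ℝ) < m := by positivity
  have hK' : (1 : ℝ) ≤ K := by exact_mod_cast hK
  have hlogK : 0 ≤ Real.log K := Real.log_nonneg hK'
  have hlogδ : Real.log δ⁻¹ ≤ Real.log (4 / δ) :=
    Real.log_le_log (by positivity) (by rw [div_eq_mul_inv]; linarith [inv_pos.2 hδ₀])
  have hlog4δ : 0 ≤ Real.log (4 / δ) :=
    hlogδ.trans' (Real.log_nonneg (one_le_inv_iff₀.2 ⟨hδ₀, hδ₁⟩))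
  set a := Real.sqrt (2 * Real.log K / m)
  set b := Real.sqrt (2 * Real.log (4 / δ) / m)
  have hab : 0 ≤ m * (a * b) := by positivity
  have ha : m * a ^ 2 = 2 * Real.log K := by
    rw [Real.sq_sqrt (by positivity)]; field_simp
  have hb : m * b ^ 2 = 2 * Real.log (4 / δ) := by
    rw [Real.sq_sqrt (by positivity)]; field_simp
  have hexp : -2 * m * (2 * a + 4 * b) ^ 2 ≤ -(Real.log K + Real.log δ⁻¹) := by
    nlinarith
  calc (K : ℝ) * Real.exp (-2 * m * (2 * a + 4 * b) ^ 2)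
      ≤ K * Real.exp (-(Real.log K + Real.log δ⁻¹)) := by gcongr
    _ = δ := by
      rw [Real.exp_neg, Real.exp_add, Real.exp_log (by positivity), Real.exp_log (by positivity)]
      field_simp

theorem generalization_bound_general
    {N : Type*} [Fintype N] [DecidableEq N] [Nonempty N]
    {A : N → Type*} [∀ i, Fintype (A i)] [∀ i, DecidableEq (A i)] [∀ i, Nonempty (A i)]
    (H : Set (NEApprox N A))
    (hHmeas : ∀ h ∈ H, Measurable (nashLoss h))
    (D : Measure (GameUtil N A)) [IsProbabilityMeasure D]
    {m : ℕ} (hm : 1 ≤ m) (δ : ℝ) (hδ : δ ∈ Set.Ioo (0 : ℝ) 1)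
    (r : ℝ)
    (C : Finset (NEApprox N A)) (K : ℕ) (hK : C.card = K)
    (hcover : Covers r C H) :
    ENNReal.ofReal (1 - δ) ≤
      (MeasureTheory.Measure.pi fun _ : Fin m => D)
        {S : Fin m → GameUtil N A | ∀ h ∈ H,
          trueRisk D h - empRisk S h ≤
            2 * (Real.sqrt (2 * Real.log K / m) + 2 * r) +
              4 * Real.sqrt (2 * Real.log (4 / δ) / m)} := by
  have hm₀ : m ≠ 0 := Nat.one_le_iff_ne_zero.1 hm
  obtain ⟨C', hC'H, hC'card, hC'cover⟩ := hcover.exists_subset_two_mul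
  set t := 2 * Real.sqrt (2 * Real.log K / m) + 4 * Real.sqrt (2 * Real.log (4 / δ) / m)
  have ht : 0 ≤ t := by positivity
  set ν := Measure.pi fun _ : Fin m => D
  set bad := ⋃ g ∈ C', {S : Fin m → GameUtil N A | t ≤ trueRisk D g - empRisk S g}
  have hbad : ν.real bad ≤ δ :=
    calc ν.real bad ≤ ∑ g ∈ C', ν.real {S | t ≤ trueRisk D g - empRisk S g} :=
          measureReal_biUnion_finset_le _ _
      _ ≤ ∑ _g ∈ C', Real.exp (-2 * m * t ^ 2) := Finset.sum_le_sum fun g hg =>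
          pi_measureReal_trueRisk_sub_empRisk_ge_le D (hHmeas g (hC'H hg)) hm₀ ht
      _ ≤ K * Real.exp (-2 * m * t ^ 2) := by
          rw [Finset.sum_const, nsmul_eq_mul, ← hK]; gcongr
      _ ≤ δ := natCast_mul_exp_le hm₀ hδ.1 hδ.2.le
  refine ((ofReal_one_sub_measureReal_compl_le ν badᶜ).trans' ?_).trans (measure_mono ?_)
  · rw [compl_compl]
    gcongr
  · intro S hS h hh
    obtain ⟨g, hgC', hhg⟩ := hC'cover h hh
    have hgap : trueRisk D g - empRisk S g < t :=
      not_le.1 fun hle => hS (Set.mem_biUnion hgC' hle)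
    have htrue := trueRisk_le_trueRisk_add D (hHmeas h hh) (hHmeas g (hC'H hgC')) hhg
    have hemp := empRisk_le_empRisk_add hm₀ S (c := 2 * r) fun u => by
      rw [dist1_comm]; exact hhg u
    linarith

theorem generalization_bound
    {N : Type*} [Fintype N] [DecidableEq N] [Nonempty N]
    {A : N → Type*} [∀ i, Fintype (A i)] [∀ i, DecidableEq (A i)] [∀ i, Nonempty (A i)]
    (H : Set (NEApprox N A)) (hH : H.Nonempty)
    (hHmeas : ∀ h ∈ H, Measurable (nashLoss h))
    (D : Measure (GameUtil N A)) [IsProbabilityMeasure D]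
    {m : ℕ} (hm : 1 ≤ m) (δ : ℝ) (hδ : δ ∈ Set.Ioo (0 : ℝ) 1)
    (r : ℝ) (hr : 0 < r)
    (C : Finset (NEApprox N A)) (hC : C.Nonempty) (K : ℕ) (hK : C.card = K)
    (hcover : Covers r C H)
    (hsupmeas : Measurable fun S : Fin m → GameUtil N A =>
      sSup ((fun h : NEApprox N A => trueRisk D h - empRisk S h) '' H)) :
    ENNReal.ofReal (1 - δ) ≤
      (MeasureTheory.Measure.pi fun _ : Fin m => D)
        {S : Fin m → GameUtil N A | ∀ h ∈ H,
          trueRisk D h - empRisk S h ≤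
            2 * (Real.sqrt (2 * Real.log K / m) + 2 * r) +
              4 * Real.sqrt (2 * Real.log (4 / δ) / m)} :=
  generalization_bound_general H hHmeas D hm δ hδ r C K hK hcover
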